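/- arXiv:1506.06861 — 9 statements merged into one kernel-verified Lean document; each statement's English description precedes it below -/
import Mathlib

section
/- Let U, V ⊆ ℂ be open sets, G : U → V holomorphic with nowhere-vanishing derivative, ℓ : U → ℂ holomorphic with exp(ℓ(z)) = G'(z) for all z ∈ U (a branch of log G'), v : V → ℂ holomorphic, η : V → ℂ continuously real-differentiable, and μ, μ* ∈ ℂ. Define the pushforwards η̃(z) := η(G(z)) + μ·ℓ(z) + μ*·conj(ℓ(z)) and ṽ(z) := v(G(z))/G'(z) on U. Then for every z ∈ U: ṽ(z)·∂η̃(z) + conj(ṽ(z))·∂̄η̃(z) + μ·ṽ'(z) + μ*·conj(ṽ'(z)) = v(G(z))·(∂η)(G(z)) + conj(v(G(z)))·(∂̄η)(G(z)) + μ·v'(G(z)) + μ*·conj(v'(G(z))). In other words, the Lie derivative of a pre-pre-Schwarzian of order (μ, μ*) transforms as a scalar under holomorphic changes of coordinates. -/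
open Complex

/-- Wirtinger derivative `∂f = (1/2)(∂f/∂x - i ∂f/∂y)`. -/
noncomputable def wD (f : ℂ → ℂ) (z : ℂ) : ℂ :=
  (fderiv ℝ f z 1 - Complex.I * fderiv ℝ f z Complex.I) / 2

/-- Conjugate Wirtinger derivative `∂̄f = (1/2)(∂f/∂x + i ∂f/∂y)`. -/
noncomputable def wDbar (f : ℂ → ℂ) (z : ℂ) : ℂ :=
  (fderiv ℝ f z 1 + Complex.I * fderiv ℝ f z Complex.I) / 2

/-!
Every real-linear map `ℂ → ℂ` is `u ↦ a u + b ū` for unique `a, b`, and the Wirtinger derivatives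
of `f` are the coefficients `a, b` of its real differential. Under a holomorphic change of
coordinates `G` with `log G' = ℓ`, the differential of `η̃ = η ∘ G + μ ℓ + μ* ℓ̄` has coefficients
`∂η(G) G' + μ ℓ'` and `∂̄η(G) Ḡ' + μ* ℓ̄'`, while `ṽ' = v'(G) - v(G) ℓ' / G'` because `G'' = G' ℓ'`.
Substituting, the terms in `ℓ'` cancel in pairs and the factors `G'` cancel against `ṽ = v(G) / G'`.
-/

open ComplexConjugate Topology

section Wirtinger

variable {f : ℂ → ℂ} {z : ℂ}

theorem ContinuousLinearMap.apply_eq_mul_add_mul_conj (L : ℂ →L[ℝ] ℂ) (u : ℂ) :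
    L u = (L 1 - I * L I) / 2 * u + (L 1 + I * L I) / 2 * conj u := by
  have hL : L u = u.re * L 1 + u.im * L I := by
    conv_lhs => rw [← re_add_im u, ← mul_one (u.re : ℂ), ← real_smul, ← real_smul, map_add,
      map_smul, map_smul, real_smul, real_smul]
  have hconj : conj u = u.re - u.im * I := by simp [Complex.ext_iff]
  rw [hL, hconj]
  linear_combination (-(L 1 - I * L I) / 2) * (re_add_im u).symm + (u.im * L I) * I_mul_I

theorem fderiv_apply_eq_wD_mul_add_wDbar_mul (u : ℂ) :
    fderiv ℝ f z u = wD f z * u + wDbar f z * conj u :=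
  (fderiv ℝ f z).apply_eq_mul_add_mul_conj u

variable {a b : ℂ}

theorem wD_eq_of_fderiv_apply (hf : ∀ u, fderiv ℝ f z u = a * u + b * conj u) : wD f z = a := by
  rw [wD, hf, hf]
  simp only [map_one, conj_I]
  linear_combination (-(a - b) / 2) * I_mul_I

theorem wDbar_eq_of_fderiv_apply (hf : ∀ u, fderiv ℝ f z u = a * u + b * conj u) :
    wDbar f z = b := by
  rw [wDbar, hf, hf]
  simp only [map_one, conj_I]
  linear_combination ((a - b) / 2) * I_mul_I

end Wirtinger

section Pushforward

variable {η G ℓ : ℂ → ℂ} {z g L : ℂ}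

theorem fderiv_comp_add_mul_add_mul_conj_apply (hη : DifferentiableAt ℝ η (G z))
    (hG : HasDerivAt G g z) (hℓ : HasDerivAt ℓ L z) (μ μs u : ℂ) :
    fderiv ℝ (fun x => η (G x) + μ * ℓ x + μs * conj (ℓ x)) z u
      = (wD η (G z) * g + μ * L) * u + (wDbar η (G z) * conj g + μs * conj L) * conj u := by
  have hℓℝ := hℓ.hasFDerivAt.restrictScalars ℝ
  have hD : HasFDerivAt (fun x => η (G x) + μ * ℓ x + μs * conj (ℓ x)) _ z :=
    ((hη.hasFDerivAt.comp z (hG.hasFDerivAt.restrictScalars ℝ)).add (hℓℝ.const_mul μ)).add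
      (hℓℝ.star.const_mul μs)
  rw [hD.fderiv]
  simp only [add_apply, ContinuousLinearMap.comp_apply, ContinuousLinearMap.coe_restrictScalars',
    ContinuousLinearMap.toSpanSingleton_apply, smul_eq_mul, smul_apply,
    ContinuousLinearEquiv.coe_coe, starL'_apply, star_mul', RCLike.star_def,
    fderiv_apply_eq_wD_mul_add_wDbar_mul, map_mul]
  ring

theorem hasDerivAt_comp_div_of_exp_eq {v G' : ℂ → ℂ} {v'w : ℂ} (hv : HasDerivAt v v'w (G z))
    (hG : HasDerivAt G (G' z) z) (hℓ : HasDerivAt ℓ L z) (hexp : ∀ᶠ x in 𝓝 z, exp (ℓ x) = G' x) :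
    HasDerivAt (fun x => v (G x) / G' x) (v'w - v (G z) * L / G' z) z := by
  have hG'z : exp (ℓ z) = G' z := hexp.self_of_nhds
  have hd := (hv.comp z hG).mul hℓ.neg.cexp
  refine (hd.congr_of_eventuallyEq ?_).congr_deriv ?_
  · filter_upwards [hexp] with x hx
    simp [← hx, exp_neg, div_eq_mul_inv]
  · rw [Pi.neg_apply, Function.comp_apply, exp_neg, hG'z]
    field_simp [hG'z ▸ exp_ne_zero _]
    ring

end Pushforward

theorem lie_derivative_prePreSchwarzian_scalar_general
    (U V : Set ℂ) (hU : IsOpen U) (hV : IsOpen V)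
    (G G' ℓ v v' η : ℂ → ℂ) (μ μs : ℂ)
    (hG : ∀ z ∈ U, HasDerivAt G (G' z) z)
    (hGmap : Set.MapsTo G U V)
    (hℓ : DifferentiableOn ℂ ℓ U)
    (hexp : ∀ z ∈ U, Complex.exp (ℓ z) = G' z)
    (hv : ∀ w ∈ V, HasDerivAt v (v' w) w)
    (hη : ContDiffOn ℝ 1 η V)
    (ηt vt : ℂ → ℂ)
    (hηt : ∀ z, ηt z = η (G z) + μ * ℓ z + μs * (starRingEnd ℂ) (ℓ z))
    (hvt : ∀ z, vt z = v (G z) / G' z) :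
    ∀ z ∈ U,
      vt z * wD ηt z + (starRingEnd ℂ) (vt z) * wDbar ηt z
        + μ * deriv vt z + μs * (starRingEnd ℂ) (deriv vt z)
      = v (G z) * wD η (G z) + (starRingEnd ℂ) (v (G z)) * wDbar η (G z)
        + μ * v' (G z) + μs * (starRingEnd ℂ) (v' (G z)) := by
  intro z hz
  have hw : G z ∈ V := hGmap hz
  have hℓz : HasDerivAt ℓ (deriv ℓ z) z := (hℓ.differentiableAt (hU.mem_nhds hz)).hasDerivAt
  have hηw : DifferentiableAt ℝ η (G z) :=
    (hη.contDiffAt (hV.mem_nhds hw)).differentiableAt one_ne_zero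
  have hG'z : G' z ≠ 0 := hexp z hz ▸ exp_ne_zero _
  have hDηt := fderiv_comp_add_mul_add_mul_conj_apply hηw (hG z hz) hℓz μ μs
  rw [← funext hηt] at hDηt
  have hDvt := hasDerivAt_comp_div_of_exp_eq (hv _ hw) (hG z hz) hℓz
    (Filter.eventually_of_mem (hU.mem_nhds hz) hexp)
  rw [← funext hvt] at hDvt
  rw [wD_eq_of_fderiv_apply hDηt, wDbar_eq_of_fderiv_apply hDηt, hDvt.deriv, hvt z]
  have hG'zc : conj (G' z) ≠ 0 := (map_ne_zero _).2 hG'z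
  simp only [map_sub, map_mul, map_div₀]
  field_simp
  ring

/-- The Lie derivative of a pre-pre-Schwarzian of order (μ, μ*) transforms
as a scalar under holomorphic changes of coordinates. -/
theorem lie_derivative_prePreSchwarzian_scalar
    (U V : Set ℂ) (hU : IsOpen U) (hV : IsOpen V)
    (G G' ℓ v v' η : ℂ → ℂ) (μ μs : ℂ)
    (hG : ∀ z ∈ U, HasDerivAt G (G' z) z)
    (hG'ne : ∀ z ∈ U, G' z ≠ 0)
    (hGmap : Set.MapsTo G U V)
    (hℓ : DifferentiableOn ℂ ℓ U)
    (hexp : ∀ z ∈ U, Complex.exp (ℓ z) = G' z)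
    (hv : ∀ w ∈ V, HasDerivAt v (v' w) w)
    (hη : ContDiffOn ℝ 1 η V)
    (ηt vt : ℂ → ℂ)
    (hηt : ∀ z, ηt z = η (G z) + μ * ℓ z + μs * (starRingEnd ℂ) (ℓ z))
    (hvt : ∀ z, vt z = v (G z) / G' z) :
    ∀ z ∈ U,
      vt z * wD ηt z + (starRingEnd ℂ) (vt z) * wDbar ηt z
        + μ * deriv vt z + μs * (starRingEnd ℂ) (deriv vt z)
      = v (G z) * wD η (G z) + (starRingEnd ℂ) (v (G z)) * wDbar η (G z)
        + μ * v' (G z) + μs * (starRingEnd ℂ) (v' (G z)) :=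
  lie_derivative_prePreSchwarzian_scalar_general U V hU hV G G' ℓ v v' η μ μs hG hGmap hℓ hexp hv hη
    ηt vt hηt hvt
end

section
/- Let κ > 0, μ, C ∈ ℂ, δ₋₁, δ₀, δ₁, σ₀, σ₁ ∈ ℝ, r > 0, and let g be holomorphic on the disk B(0,r). Set δ(z) := 2/z + δ₋₁ + δ₀·z + δ₁·z² and σ(z) := -√κ·(1 + σ₀·z + σ₁·z²). If for all z ∈ B(0,r) with Im z > 0 one has δ(z)·(-i/z + g(z)) + μ·(σ(z)·δ'(z) - σ'(z)·δ(z)) + (1/2)·σ(z)²·(i/z² + g'(z)) = C·σ(z), then necessarily μ = i(4-κ)/(4√κ). That is, the singular behaviour j⁺(z) = -i/z + O(1) of the current at the source forces the pre-pre-Schwarzian order μ = i(4-κ)/(4√κ). -/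
/-!
Multiplying the equation by `z²` removes every singularity: `z δ(z) → 2`, `z² δ'(z) → -2`, and
`σ`, `σ'`, `g`, `g'` are continuous at `0`, so `z²` times the equation tends to
`-2i + 2μ√κ + iκ/2` as `z → 0`. The equation holds at points of the upper half-plane
accumulating at `0`, hence this limit vanishes, which is the claimed value of `μ`.
-/

open Complex Filter Topology

lemma tendsto_pow_mul_of_eq_div_pow_add {𝕜 : Type*} [NormedField 𝕜] {f h : 𝕜 → 𝕜} {a : 𝕜}
    {n : ℕ} (hn : n ≠ 0) (hf : ∀ z ≠ 0, f z = a / z ^ n + h z) (hh : ContinuousAt h 0) :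
    Tendsto (fun z => z ^ n * f z) (𝓝[≠] 0) (𝓝 a) := by
  have hlim : Tendsto (fun z => a + z ^ n * h z) (𝓝[≠] 0) (𝓝 (a + 0 ^ n * h 0)) :=
    (((continuous_pow n).continuousAt.mul hh).const_add a).tendsto.mono_left nhdsWithin_le_nhds
  refine (hlim.congr' ?_).trans (le_of_eq ?_)
  · filter_upwards [self_mem_nhdsWithin] with z (hz : z ≠ 0)
    rw [hf z hz]
    field_simp
  · simp [hn]

lemma nhdsWithin_setOf_im_pos_zero_neBot : (𝓝[{z : ℂ | 0 < z.im}] 0).NeBot :=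
  mem_closure_iff_nhdsWithin_neBot.mp <| by simp [closure_setOfPred_lt_im]

lemma eq_zero_of_tendsto_of_eq_zero_on_upper_half_ball {F : ℂ → ℂ} {L : ℂ} {r : ℝ}
    (hr : 0 < r) (hF : Tendsto F (𝓝[≠] 0) (𝓝 L))
    (hzero : ∀ z ∈ Metric.ball (0 : ℂ) r, 0 < z.im → F z = 0) : L = 0 := by
  have := nhdsWithin_setOf_im_pos_zero_neBot
  have hsub : {z : ℂ | 0 < z.im} ⊆ {0}ᶜ := fun z hz h0 => by simp_all
  refine tendsto_nhds_unique (hF.mono_left (nhdsWithin_mono _ hsub))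
    (tendsto_const_nhds.congr' ?_)
  filter_upwards [inter_mem_nhdsWithin _ (Metric.ball_mem_nhds 0 hr)] with z hz
  exact (hzero z hz.2 hz.1).symm

section CurrentEquation

variable (μ C : ℂ) (δ dδ σ dσ g g' : ℂ → ℂ)

/-- `σ` times `(δ/σ) j⁺ + μ [σ,δ]/σ + ½ σ (j⁺)' - C`, for `j⁺ = -i/z + g` and `(j⁺)' = i/z² + g'`. -/
noncomputable def currentDefect (z : ℂ) : ℂ :=
  δ z * (-I / z + g z) + μ * (σ z * dδ z - dσ z * δ z)
    + (1 / 2) * σ z ^ 2 * (I / z ^ 2 + g' z) - C * σ z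

variable {μ C δ dδ σ dσ g g'}

lemma tendsto_sq_mul_currentDefect {a : ℂ}
    (hδ : Tendsto (fun z => z * δ z) (𝓝[≠] 0) (𝓝 a))
    (hdδ : Tendsto (fun z => z ^ 2 * dδ z) (𝓝[≠] 0) (𝓝 (-a)))
    (hσ : ContinuousAt σ 0) (hdσ : ContinuousAt dσ 0) (hg : ContinuousAt g 0)
    (hg' : ContinuousAt g' 0) :
    Tendsto (fun z => z ^ 2 * currentDefect μ C δ dδ σ dσ g g' z) (𝓝[≠] 0)
      (𝓝 (-I * a - μ * a * σ 0 + (1 / 2) * σ 0 ^ 2 * I)) := by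
  have punctured {f : ℂ → ℂ} (hf : ContinuousAt f 0) : Tendsto f (𝓝[≠] 0) (𝓝 (f 0)) :=
    hf.tendsto.mono_left nhdsWithin_le_nhds
  have hz : Tendsto (fun z : ℂ => z) (𝓝[≠] 0) (𝓝 0) := nhdsWithin_le_nhds
  have hlim :=
    (((hδ.const_mul (-I)).add ((hz.mul hδ).mul (punctured hg))).add
      ((((punctured hσ).mul hdδ).sub ((hz.mul (punctured hdσ)).mul hδ)).const_mul μ)).add
      ((((punctured hσ).pow 2).const_mul (1 / 2)).mul
        (((hz.pow 2).mul (punctured hg')).const_add I)) |>.sub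
      (((hz.pow 2).mul (punctured hσ)).const_mul C)
  refine (hlim.congr' ?_).trans (le_of_eq ?_)
  · filter_upwards [self_mem_nhdsWithin] with z (hz : z ≠ 0)
    simp only [currentDefect]
    field_simp
  · congr 1
    ring

end CurrentEquation

open Complex

/-- The singular behaviour `j⁺(z) = -i/z + O(1)` of the current at the source
forces the pre-pre-Schwarzian order `μ = i(4-κ)/(4√κ)`. -/
theorem mu_forced_by_singularity (κ : ℝ) (hκ : 0 < κ) (μ C : ℂ)
    (δm1 δ0 δ1 σ0 σ1 : ℝ) (r : ℝ) (hr : 0 < r) (g : ℂ → ℂ)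
    (hg : DifferentiableOn ℂ g (Metric.ball 0 r))
    (δ σ dδ dσ : ℂ → ℂ)
    (hδ : ∀ z, δ z = 2 / z + (δm1 : ℂ) + (δ0 : ℂ) * z + (δ1 : ℂ) * z ^ 2)
    (hdδ : ∀ z, dδ z = -2 / z ^ 2 + (δ0 : ℂ) + 2 * (δ1 : ℂ) * z)
    (hσ : ∀ z, σ z = -(Real.sqrt κ : ℂ) * (1 + (σ0 : ℂ) * z + (σ1 : ℂ) * z ^ 2))
    (hdσ : ∀ z, dσ z = -(Real.sqrt κ : ℂ) * ((σ0 : ℂ) + 2 * (σ1 : ℂ) * z))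
    (heq : ∀ z ∈ Metric.ball (0 : ℂ) r, 0 < z.im →
      δ z * (-Complex.I / z + g z)
        + μ * (σ z * dδ z - dσ z * δ z)
        + (1 / 2) * σ z ^ 2 * (Complex.I / z ^ 2 + deriv g z)
      = C * σ z) :
    μ = Complex.I * (4 - (κ : ℂ)) / (4 * (Real.sqrt κ : ℂ)) := by
  have hs : (Real.sqrt κ : ℂ) ≠ 0 := by exact_mod_cast (Real.sqrt_pos.mpr hκ).ne'
  have hs2 : (Real.sqrt κ : ℂ) ^ 2 = κ := by exact_mod_cast Real.sq_sqrt hκ.le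
  have hres : Tendsto (fun z => z * δ z) (𝓝[≠] 0) (𝓝 2) := by
    simpa using tendsto_pow_mul_of_eq_div_pow_add one_ne_zero
      (fun z _ => by rw [hδ, pow_one, add_assoc, add_assoc])
      (by fun_prop : ContinuousAt (fun z : ℂ => (δm1 : ℂ) + ((δ0 : ℂ) * z + (δ1 : ℂ) * z ^ 2)) 0)
  have hres' : Tendsto (fun z => z ^ 2 * dδ z) (𝓝[≠] 0) (𝓝 (-2)) :=
    tendsto_pow_mul_of_eq_div_pow_add two_ne_zero
      (fun z _ => by rw [hdδ, neg_div, add_assoc])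
      (by fun_prop : ContinuousAt (fun z : ℂ => (δ0 : ℂ) + 2 * (δ1 : ℂ) * z) 0)
  have hga := hg.analyticOnNhd Metric.isOpen_ball
  have h0 : (0 : ℂ) ∈ Metric.ball 0 r := Metric.mem_ball_self hr
  have hlim := tendsto_sq_mul_currentDefect (μ := μ) (C := C) (σ := σ) (dσ := dσ) hres hres'
    (by rw [funext hσ]; fun_prop) (by rw [funext hdσ]; fun_prop)
    (hga 0 h0).continuousAt (hga.deriv 0 h0).continuousAt
  have hL := eq_zero_of_tendsto_of_eq_zero_on_upper_half_ball hr hlim fun z hz him => by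
    rw [currentDefect, heq z hz him, sub_self, mul_zero]
  rw [hσ 0] at hL
  field_simp
  linear_combination 2 * hL - I * hs2
end

section
/- Let κ > 0, α, β, δ₋₁, δ₀, δ₁ ∈ ℝ and μ ∈ ℂ. Set δ(z) := 2/z + δ₋₁ + δ₀·z + δ₁·z² and σ(z) := -√κ (constant, so σ' = 0). Then the identity δ(z)·(-i/z + iα) + μ·(σ(z)·δ'(z) - σ'(z)·δ(z)) + (1/2)·σ(z)²·(i/z²) - i·β·σ(z) = 0 holds for all z ∈ ℍ if and only if all of the following hold: μ = i(4-κ)/(4√κ); δ₋₁ = 2α; β√κ + α·δ₋₁ - δ₀ + i√κ·μ·δ₀ = 0; α·δ₀ - δ₁ + 2i√κ·μ·δ₁ = 0; α·δ₁ = 0. -/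
open Complex

/-- Classification equation for (δ,σ)-SLE coupled to GFF with Dirichlet
covariance, chordal-type driving field `σ(z) = -√κ`. -/
theorem coupling_classification_chordal (κ : ℝ) (hκ : 0 < κ)
    (α β δm1 δ0 δ1 : ℝ) (μ : ℂ)
    (δ σ dδ dσ : ℂ → ℂ)
    (hδ : ∀ z, δ z = 2 / z + (δm1 : ℂ) + (δ0 : ℂ) * z + (δ1 : ℂ) * z ^ 2)
    (hdδ : ∀ z, dδ z = -2 / z ^ 2 + (δ0 : ℂ) + 2 * (δ1 : ℂ) * z)
    (hσ : ∀ z, σ z = -(Real.sqrt κ : ℂ))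
    (hdσ : ∀ z, dσ z = 0) :
    (∀ z : ℂ, 0 < z.im →
      δ z * (-Complex.I / z + Complex.I * (α : ℂ))
        + μ * (σ z * dδ z - dσ z * δ z)
        + (1 / 2) * σ z ^ 2 * (Complex.I / z ^ 2)
        - Complex.I * (β : ℂ) * σ z = 0)
    ↔ (μ = Complex.I * (4 - (κ : ℂ)) / (4 * (Real.sqrt κ : ℂ))
       ∧ δm1 = 2 * α
       ∧ (β : ℂ) * (Real.sqrt κ : ℂ) + (α : ℂ) * (δm1 : ℂ) - (δ0 : ℂ)
           + Complex.I * (Real.sqrt κ : ℂ) * μ * (δ0 : ℂ) = 0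
       ∧ (α : ℂ) * (δ0 : ℂ) - (δ1 : ℂ)
           + 2 * Complex.I * (Real.sqrt κ : ℂ) * μ * (δ1 : ℂ) = 0
       ∧ α * δ1 = 0) := by
  set s : ℂ := (Real.sqrt κ : ℂ) with hs_def
  have hsne : s ≠ 0 := by
    simp only [hs_def, ne_eq, Complex.ofReal_eq_zero]
    exact ne_of_gt (Real.sqrt_pos.mpr hκ)
  -- the polynomial coefficients
  set c0 : ℂ := -2*Complex.I + 2*μ*s + Complex.I*(κ:ℂ)/2 with hc0_def
  set c1 : ℂ := Complex.I*(2*(α:ℂ) - (δm1:ℂ)) with hc1_def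
  set c2 : ℂ := Complex.I*((α:ℂ)*(δm1:ℂ) - (δ0:ℂ)) + Complex.I*(β:ℂ)*s - μ*s*(δ0:ℂ) with hc2_def
  set c3 : ℂ := Complex.I*((α:ℂ)*(δ0:ℂ) - (δ1:ℂ)) - 2*μ*s*(δ1:ℂ) with hc3_def
  set c4 : ℂ := Complex.I*(α:ℂ)*(δ1:ℂ) with hc4_def
  -- key algebraic identity: z^2 times the LHS is the polynomial
  have hfac : ∀ z : ℂ, z ≠ 0 →
      (δ z * (-Complex.I / z + Complex.I * (α : ℂ))
        + μ * (σ z * dδ z - dσ z * δ z)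
        + (1 / 2) * σ z ^ 2 * (Complex.I / z ^ 2)
        - Complex.I * (β : ℂ) * σ z) * z ^ 2
      = c0 + c1*z + c2*z^2 + c3*z^3 + c4*z^4 := by
    intro z hz0
    rw [hδ, hdδ, hσ, hdσ]
    have hs2 : s^2 = (κ:ℂ) := by
      rw [hs_def]
      norm_cast
      exact Real.sq_sqrt hκ.le
    field_simp [hc0_def, hc1_def, hc2_def, hc3_def, hc4_def]
    linear_combination (Complex.I) * hs2
  constructor
  · intro h
    have hp : ∀ z : ℂ, 0 < z.im → c0 + c1*z + c2*z^2 + c3*z^3 + c4*z^4 = 0 := by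
      intro z hz
      have hz0 : z ≠ 0 := by
        intro h0; rw [h0] at hz; simp at hz
      rw [← hfac z hz0, h z hz, zero_mul]
    have E1 := hp Complex.I (by simp)
    have E2 := hp (2*Complex.I) (by simp)
    have E3 := hp (3*Complex.I) (by simp)
    have E4 := hp (4*Complex.I) (by simp)
    have E5 := hp (5*Complex.I) (by simp)
    have hc0 : c0 = 0 := by linear_combination 5*E1 - 10*E2 + 10*E3 - 5*E4 + E5
    have hc1 : c1 * Complex.I = 0 := by
      linear_combination (-77/12)*E1 + (107/6)*E2 - (39/2)*E3 + (61/6)*E4 - (25/12)*E5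
    have hc2r : c2 * Complex.I^2 = 0 := by
      linear_combination (71/24)*E1 - (59/6)*E2 + (49/4)*E3 - (41/6)*E4 + (35/24)*E5
    have hc3r : c3 * Complex.I^3 = 0 := by
      linear_combination (-7/12)*E1 + (13/6)*E2 - 3*E3 + (11/6)*E4 - (5/12)*E5
    have hc4r : c4 * Complex.I^4 = 0 := by
      linear_combination (1/24)*E1 - (1/6)*E2 + (1/4)*E3 - (1/6)*E4 + (1/24)*E5
    have hc1' : c1 = 0 := by
      rcases mul_eq_zero.mp hc1 with h' | h'
      · exact h'
      · exact absurd h' Complex.I_ne_zero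
    have hc2' : c2 = 0 := by
      rcases mul_eq_zero.mp hc2r with h' | h'
      · exact h'
      · exact absurd h' (pow_ne_zero 2 Complex.I_ne_zero)
    have hc3' : c3 = 0 := by
      rcases mul_eq_zero.mp hc3r with h' | h'
      · exact h'
      · exact absurd h' (pow_ne_zero 3 Complex.I_ne_zero)
    have hc4' : c4 = 0 := by
      rcases mul_eq_zero.mp hc4r with h' | h'
      · exact h'
      · exact absurd h' (pow_ne_zero 4 Complex.I_ne_zero)
    refine ⟨?_, ?_, ?_, ?_, ?_⟩
    · rw [eq_div_iff (by simpa using hsne : (4:ℂ)*s ≠ 0)]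
      linear_combination 2*hc0
    · have : (δm1:ℂ) = 2*(α:ℂ) := by
        have h' : 2*(α:ℂ) - (δm1:ℂ) = 0 := by
          rcases mul_eq_zero.mp hc1' with h'' | h''
          · exact absurd h'' Complex.I_ne_zero
          · exact h''
        linear_combination -h'
      exact_mod_cast this
    · linear_combination (-Complex.I)*hc2' + ((α:ℂ)*(δm1:ℂ) - (δ0:ℂ) + (β:ℂ)*s)*Complex.I_sq
    · linear_combination (-Complex.I)*hc3' + ((α:ℂ)*(δ0:ℂ) - (δ1:ℂ))*Complex.I_sq
    · have : (α:ℂ)*(δ1:ℂ) = 0 := by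
        rcases mul_eq_zero.mp hc4' with h' | h'
        · rcases mul_eq_zero.mp h' with h'' | h''
          · exact absurd h'' Complex.I_ne_zero
          · rw [h'', zero_mul]
        · rw [h', mul_zero]
      exact_mod_cast this
  · rintro ⟨h1, h2, h3, h4, h5⟩ z hz
    have hz0 : z ≠ 0 := by
      intro h0; rw [h0] at hz; simp at hz
    have h2c : (δm1:ℂ) = 2*(α:ℂ) := by exact_mod_cast h2
    have h5c : (α:ℂ)*(δ1:ℂ) = 0 := by exact_mod_cast h5
    have hμ : μ * (4*s) = Complex.I * (4 - (κ:ℂ)) := by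
      rw [h1]; field_simp
    have hP : c0 + c1*z + c2*z^2 + c3*z^3 + c4*z^4 = 0 := by
      rw [hc0_def, hc1_def, hc2_def, hc3_def, hc4_def]
      linear_combination (1/2)*hμ + (-(Complex.I)*z)*h2c + Complex.I*z^2*h3
        + Complex.I*z^3*h4 + Complex.I*z^4*h5c
        + (-(s*μ*(δ0:ℂ)*z^2) - 2*s*μ*(δ1:ℂ)*z^3)*Complex.I_sq
    have := hfac z hz0
    rw [hP] at this
    rcases mul_eq_zero.mp this with h' | h'
    · exact h'
    · exact absurd h' (pow_ne_zero 2 hz0)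
end

section
/- Let κ > 0, α, β, δ₋₁, δ₀, δ₁ ∈ ℝ and μ ∈ ℂ. Set δ(z) := 2/z + δ₋₁ + δ₀·z + δ₁·z² and σ(z) := -√κ·(1 - z²). Then the identity δ(z)·(-i/z + iα) + μ·(σ(z)·δ'(z) - σ'(z)·δ(z)) + (1/2)·σ(z)²·(i/z²) - i·β·σ(z) = 0 holds for all z ∈ ℍ if and only if all of the following hold: μ = i(4-κ)/(4√κ); δ₋₁ = 2α; β√κ - κ + 6i√κ·μ + α·δ₋₁ - δ₀ + i√κ·μ·δ₀ = 0; α·δ₀ - δ₁ + 2i√κ·μ·(δ₁ + δ₋₁) = 0; α·δ₁ + i√κ·μ·δ₀ + κ/2 - β√κ = 0. -/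
/-!
Multiplied by `z²`, the left-hand side becomes `i` times a quartic polynomial in `z`. Using
`(√κ)² = κ` and `i² = -1`, its coefficients are `κ/2 - 2 - 2i√κμ` (which vanishes iff
`μ = i(4-κ)/(4√κ)`), `2α - δ₋₁`, and the last three expressions of the conclusion.
A polynomial vanishing on the infinite set `ℍ` is zero, so the identity holds on `ℍ` exactly when
these five coefficients vanish.
-/

open Complex Polynomial

theorem quartic_eq_zero_on_infinite_iff {R : Type*} [CommRing R] [IsDomain R] {S : Set R}
    (hS : S.Infinite) {c₀ c₁ c₂ c₃ c₄ : R} :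
    (∀ z ∈ S, c₀ + c₁ * z + c₂ * z ^ 2 + c₃ * z ^ 3 + c₄ * z ^ 4 = 0) ↔
      c₀ = 0 ∧ c₁ = 0 ∧ c₂ = 0 ∧ c₃ = 0 ∧ c₄ = 0 := by
  refine ⟨fun h => ?_, fun ⟨h₀, h₁, h₂, h₃, h₄⟩ _ _ => by simp [h₀, h₁, h₂, h₃, h₄]⟩
  set p : R[X] := C c₀ + C c₁ * X + C c₂ * X ^ 2 + C c₃ * X ^ 3 + C c₄ * X ^ 4
  have hp : p = 0 :=
    p.eq_zero_of_infinite_isRoot <| hS.mono fun z hz => by simpa [p] using h z hz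
  have hcoeff (n : ℕ) : p.coeff n = 0 := by rw [hp, coeff_zero]
  exact ⟨by simpa [p] using hcoeff 0, by simpa [p] using hcoeff 1, by simpa [p] using hcoeff 2,
    by simpa [p] using hcoeff 3, by simpa [p] using hcoeff 4⟩

theorem Complex.infinite_setOf_im_pos : {z : ℂ | 0 < z.im}.Infinite :=
  infinite_of_mem_nhds I (UpperHalfPlane.isOpen_upperHalfPlaneSet.mem_nhds (by simp))

theorem dipolar_equation_mul_sq {s κ μ α β δm1 δ0 δ1 z : ℂ} (hs2 : s ^ 2 = κ) (hz : z ≠ 0) :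
    z ^ 2 * ((2 / z + δm1 + δ0 * z + δ1 * z ^ 2) * (-I / z + I * α)
      + μ * (-s * (1 - z ^ 2) * (-2 / z ^ 2 + δ0 + 2 * δ1 * z)
        - 2 * s * z * (2 / z + δm1 + δ0 * z + δ1 * z ^ 2))
      + (1 / 2) * (-s * (1 - z ^ 2)) ^ 2 * (I / z ^ 2)
      - I * β * (-s * (1 - z ^ 2)))
    = I * ((κ / 2 - 2 - 2 * I * s * μ) + (2 * α - δm1) * z
      + (β * s - κ + 6 * I * s * μ + α * δm1 - δ0 + I * s * μ * δ0) * z ^ 2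
      + (α * δ0 - δ1 + 2 * I * s * μ * (δ1 + δm1)) * z ^ 3
      + (α * δ1 + I * s * μ * δ0 + κ / 2 - β * s) * z ^ 4) := by
  subst hs2
  field_simp
  -- The correction is the `μ`-part of the quartic, where `i · i` on the right must become `-1`.
  linear_combination
    2 * μ * s * (2 - (6 + δ0) * z ^ 2 - 2 * (δ1 + δm1) * z ^ 3 - δ0 * z ^ 4) * I_sq

theorem dipolar_const_coeff_eq_zero_iff {s κ μ : ℂ} (hs : s ≠ 0) :
    κ / 2 - 2 - 2 * I * s * μ = 0 ↔ μ = I * (4 - κ) / (4 * s) := by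
  rw [eq_div_iff (mul_ne_zero (by norm_num) hs)]
  constructor <;> intro h
  · linear_combination (2 * I) * h + (4 * s * μ) * I_sq
  · linear_combination (-I / 2) * h - ((4 - κ) / 2) * I_sq

/-- Classification equation for (δ,σ)-SLE coupled to GFF with Dirichlet
covariance, dipolar-type driving field `σ(z) = -√κ(1-z²)`. -/
theorem coupling_classification_dipolar (κ : ℝ) (hκ : 0 < κ)
    (α β δm1 δ0 δ1 : ℝ) (μ : ℂ)
    (δ σ dδ dσ : ℂ → ℂ)
    (hδ : ∀ z, δ z = 2 / z + (δm1 : ℂ) + (δ0 : ℂ) * z + (δ1 : ℂ) * z ^ 2)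
    (hdδ : ∀ z, dδ z = -2 / z ^ 2 + (δ0 : ℂ) + 2 * (δ1 : ℂ) * z)
    (hσ : ∀ z, σ z = -(Real.sqrt κ : ℂ) * (1 - z ^ 2))
    (hdσ : ∀ z, dσ z = 2 * (Real.sqrt κ : ℂ) * z) :
    (∀ z : ℂ, 0 < z.im →
      δ z * (-Complex.I / z + Complex.I * (α : ℂ))
        + μ * (σ z * dδ z - dσ z * δ z)
        + (1 / 2) * σ z ^ 2 * (Complex.I / z ^ 2)
        - Complex.I * (β : ℂ) * σ z = 0)
    ↔ (μ = Complex.I * (4 - (κ : ℂ)) / (4 * (Real.sqrt κ : ℂ))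
       ∧ δm1 = 2 * α
       ∧ (β : ℂ) * (Real.sqrt κ : ℂ) - (κ : ℂ) + 6 * Complex.I * (Real.sqrt κ : ℂ) * μ
           + (α : ℂ) * (δm1 : ℂ) - (δ0 : ℂ)
           + Complex.I * (Real.sqrt κ : ℂ) * μ * (δ0 : ℂ) = 0
       ∧ (α : ℂ) * (δ0 : ℂ) - (δ1 : ℂ)
           + 2 * Complex.I * (Real.sqrt κ : ℂ) * μ * ((δ1 : ℂ) + (δm1 : ℂ)) = 0
       ∧ (α : ℂ) * (δ1 : ℂ) + Complex.I * (Real.sqrt κ : ℂ) * μ * (δ0 : ℂ)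
           + (κ : ℂ) / 2 - (β : ℂ) * (Real.sqrt κ : ℂ) = 0) := by
  have hs : (√κ : ℂ) ≠ 0 := ofReal_ne_zero.2 (Real.sqrt_pos.2 hκ).ne'
  have hs2 : (√κ : ℂ) ^ 2 = κ := by exact_mod_cast Real.sq_sqrt hκ.le
  have hδm1 : (2 * α - δm1 : ℂ) = 0 ↔ δm1 = 2 * α := by
    norm_cast
    rw [sub_eq_zero, eq_comm]
  refine Iff.trans ?_ ((quartic_eq_zero_on_infinite_iff infinite_setOf_im_pos).trans
    (and_congr (dipolar_const_coeff_eq_zero_iff hs) (and_congr hδm1 Iff.rfl)))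
  refine forall₂_congr fun z hz => ?_
  have hz0 : z ≠ 0 := by rintro rfl; simp at hz
  rw [hδ, hdδ, hσ, hdσ, ← mul_right_inj' (pow_ne_zero 2 hz0), mul_zero,
    dipolar_equation_mul_sq hs2 hz0, mul_eq_zero_iff_left I_ne_zero]
end

section
/- Let κ > 0, ξ ∈ ℝ, μ := i(4-κ)/(4√κ). On ℍ define δ(z) := 2/z + 2ξ·z, σ(z) := -√κ, η(z) := -(2/√κ)·Arg(z), and u(z) := 2·Im(1/z). Then for all z, w ∈ ℍ with z ≠ w: (a) σ(z)·∂η(z) + conj(σ(z))·∂̄η(z) + 2·Re(μ·σ'(z)) = u(z); (b) δ(z)·∂η(z) + conj(δ(z))·∂̄η(z) + 2·Re(μ·δ'(z)) + (1/2)·[σ(z)·∂u(z) + conj(σ(z))·∂̄u(z)] = 0; (c) δ(z)·∂_zΓ_D(z,w) + conj(δ(z))·∂_z̄Γ_D(z,w) + δ(w)·∂_wΓ_D(z,w) + conj(δ(w))·∂_w̄Γ_D(z,w) + u(z)·u(w) = 0. Hence the Gaussian free field data coupled to the chordal SLE with a fixed time reparametrization (δ(z) = 2/z + 2ξz, σ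 = -√κ) coincides with the chordal one. -/
open Complex

/-- The Green's function of the upper half-plane with Dirichlet boundary
conditions: `Γ_D(z,w) = -log|z-w| + log|z - conj w|`. -/
noncomputable def GammaD (z w : ℂ) : ℝ :=
  - Real.log ‖z - w‖ + Real.log ‖z - (starRingEnd ℂ) w‖

lemma key {f g : ℂ → ℂ} {c z : ℂ} (hg : HasDerivAt g c z)
    (hfg : f = fun x => (g x + (starRingEnd ℂ) (g x)) / 2) :
    wD f z = c / 2 ∧ wDbar f z = (starRingEnd ℂ) c / 2 := by
  have h1 : HasFDerivAt g (((1 : ℂ →L[ℂ] ℂ).smulRight c).restrictScalars ℝ) z :=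
    hg.hasFDerivAt.restrictScalars ℝ
  have h2 := (Complex.conjCLE.hasFDerivAt.comp z h1)
  have h3 : HasFDerivAt f ((2:ℂ)⁻¹ • ((((1 : ℂ →L[ℂ] ℂ).smulRight c).restrictScalars ℝ) +
      ((Complex.conjCLE : ℂ →L[ℝ] ℂ).comp (((1 : ℂ →L[ℂ] ℂ).smulRight c).restrictScalars ℝ)))) z := by
    rw [hfg]
    refine ((h1.add h2).const_smul ((2:ℂ)⁻¹)).congr_of_eventuallyEq (Filter.Eventually.of_forall fun x => ?_)
    simp [div_eq_inv_mul, smul_eq_mul, Function.comp]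
  have hf := h3.fderiv
  constructor
  · rw [wD, hf]
    simp [Complex.conjCLE_apply, Complex.conj_I, smul_eq_mul]
    ring_nf
    rw [Complex.I_sq]
    ring
  · rw [wDbar, hf]
    simp [Complex.conjCLE_apply, Complex.conj_I, smul_eq_mul]
    ring_nf
    rw [Complex.I_sq]
    ring

lemma ofReal_im' (c : ℂ) : ((c.im : ℝ) : ℂ) = -Complex.I * (c - (starRingEnd ℂ) c) / 2 := by
  rw [Complex.sub_conj]
  push_cast
  linear_combination (c.im : ℂ) * Complex.I_mul_I

lemma ofReal_re' (c : ℂ) : ((c.re : ℝ) : ℂ) = (c + (starRingEnd ℂ) c) / 2 := by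
  rw [Complex.add_conj]
  push_cast
  ring

lemma slit_cases {a : ℂ} (h : a ≠ 0) : a ∈ Complex.slitPlane ∨ -a ∈ Complex.slitPlane := by
  rw [Complex.mem_slitPlane_iff, Complex.mem_slitPlane_iff]
  simp only [Complex.neg_re, Complex.neg_im, neg_ne_zero]
  rcases eq_or_ne a.im 0 with h1 | h1
  · have h2 : a.re ≠ 0 := by
      intro h2
      exact h (Complex.ext h2 h1)
    rcases h2.lt_or_gt with h3 | h3
    · right; left; linarith
    · left; left; exact h3
  · left; right; exact h1
lemma gammaD_left {z w : ℂ} (hzw : z - w ≠ 0) (h2 : z - (starRingEnd ℂ) w ∈ Complex.slitPlane) :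
    wD (fun x => ((GammaD x w : ℝ) : ℂ)) z = (-(z - w)⁻¹ + (z - (starRingEnd ℂ) w)⁻¹) / 2 ∧
    wDbar (fun x => ((GammaD x w : ℝ) : ℂ)) z
      = (starRingEnd ℂ) (-(z - w)⁻¹ + (z - (starRingEnd ℂ) w)⁻¹) / 2 := by
  have hB : HasDerivAt (fun x => Complex.log (x - (starRingEnd ℂ) w))
      ((z - (starRingEnd ℂ) w)⁻¹) z := by
    simpa [Function.comp_def] using (Complex.hasDerivAt_log h2).comp z ((hasDerivAt_id z).sub_const _)
  rcases slit_cases hzw with h1 | h1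
  · have hA : HasDerivAt (fun x => Complex.log (x - w)) ((z - w)⁻¹) z := by
      simpa [Function.comp_def] using (Complex.hasDerivAt_log h1).comp z ((hasDerivAt_id z).sub_const w)
    refine key (hA.neg.add hB) (funext fun x => ?_)
    rw [GammaD]
    push_cast
    rw [← Complex.log_re (x - w), ← Complex.log_re (x - (starRingEnd ℂ) w),
      ofReal_re', ofReal_re']
    simp only [Pi.add_apply, Pi.neg_apply, map_add, map_neg]
    ring
  · rw [neg_sub] at h1
    have hA : HasDerivAt (fun x => Complex.log (w - x)) ((z - w)⁻¹) z := by
      have h' := (Complex.hasDerivAt_log h1).comp z ((hasDerivAt_id z).const_sub w)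
      have e : (w - z)⁻¹ * -1 = (z - w)⁻¹ := by
        rw [← neg_sub z w, inv_neg]; ring
      exact e ▸ h'
    refine key (hA.neg.add hB) (funext fun x => ?_)
    rw [GammaD]
    push_cast
    rw [show ‖x - w‖ = ‖w - x‖ from norm_sub_rev x w,
      ← Complex.log_re (w - x), ← Complex.log_re (x - (starRingEnd ℂ) w),
      ofReal_re', ofReal_re']
    simp only [Pi.add_apply, Pi.neg_apply, map_add, map_neg]
    ring

lemma gammaD_right {z w : ℂ} (hzw : z - w ≠ 0) (h2 : w - (starRingEnd ℂ) z ∈ Complex.slitPlane) :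
    wD (fun x => ((GammaD z x : ℝ) : ℂ)) w = ((z - w)⁻¹ + (w - (starRingEnd ℂ) z)⁻¹) / 2 ∧
    wDbar (fun x => ((GammaD z x : ℝ) : ℂ)) w
      = (starRingEnd ℂ) ((z - w)⁻¹ + (w - (starRingEnd ℂ) z)⁻¹) / 2 := by
  have hB : HasDerivAt (fun x => Complex.log (x - (starRingEnd ℂ) z))
      ((w - (starRingEnd ℂ) z)⁻¹) w := by
    simpa [Function.comp_def] using (Complex.hasDerivAt_log h2).comp w ((hasDerivAt_id w).sub_const _)
  have habs : ∀ x : ℂ, ‖z - (starRingEnd ℂ) x‖ = ‖x - (starRingEnd ℂ) z‖ := by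
    intro x
    rw [← Complex.norm_conj (z - (starRingEnd ℂ) x), map_sub, Complex.conj_conj, norm_sub_rev]
  rcases slit_cases hzw with h1 | h1
  · have hA : HasDerivAt (fun x => Complex.log (z - x)) (-(z - w)⁻¹) w := by
      have h' := (Complex.hasDerivAt_log h1).comp w ((hasDerivAt_id w).const_sub z)
      have e : (z - w)⁻¹ * -1 = -(z - w)⁻¹ := by ring
      exact e ▸ h'
    have hfg : (fun x => ((GammaD z x : ℝ) : ℂ)) = fun x =>
        ((-Complex.log (z - x) + Complex.log (x - (starRingEnd ℂ) z)) +
          (starRingEnd ℂ) (-Complex.log (z - x) + Complex.log (x - (starRingEnd ℂ) z))) / 2 := by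
      funext x
      rw [GammaD]
      push_cast
      rw [habs x, ← Complex.log_re (z - x), ← Complex.log_re (x - (starRingEnd ℂ) z),
        ofReal_re', ofReal_re']
      simp only [map_add, map_neg]
      ring
    obtain ⟨ha, hb⟩ := key (hA.neg.add hB) hfg
    simp only [neg_neg] at ha hb
    exact ⟨ha, hb⟩
  · rw [neg_sub] at h1
    have hA : HasDerivAt (fun x => Complex.log (x - z)) (-(z - w)⁻¹) w := by
      have h' := (Complex.hasDerivAt_log h1).comp w ((hasDerivAt_id w).sub_const z)
      have e : (w - z)⁻¹ * 1 = -(z - w)⁻¹ := by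
        rw [← neg_sub z w, inv_neg]; ring
      exact e ▸ h'
    have hfg : (fun x => ((GammaD z x : ℝ) : ℂ)) = fun x =>
        ((-Complex.log (x - z) + Complex.log (x - (starRingEnd ℂ) z)) +
          (starRingEnd ℂ) (-Complex.log (x - z) + Complex.log (x - (starRingEnd ℂ) z))) / 2 := by
      funext x
      rw [GammaD]
      push_cast
      rw [habs x, show ‖z - x‖ = ‖x - z‖ from norm_sub_rev z x,
        ← Complex.log_re (x - z), ← Complex.log_re (x - (starRingEnd ℂ) z),
        ofReal_re', ofReal_re']
      simp only [map_add, map_neg]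
      ring
    obtain ⟨ha, hb⟩ := key (hA.neg.add hB) hfg
    simp only [neg_neg] at ha hb
    exact ⟨ha, hb⟩
lemma ealg1 (ξ : ℝ) {a b : ℂ} (ha : a ≠ 0) (hb : b ≠ 0) (hab : a - b ≠ 0) :
    (2/a + 2*(ξ:ℂ)*a) * (-(a-b)⁻¹) + (2/b + 2*(ξ:ℂ)*b) * (a-b)⁻¹
      = 2 * a⁻¹ * b⁻¹ - 2*(ξ:ℂ) := by
  field_simp
  ring

lemma ealg2 (ξ : ℝ) {a b : ℂ} (ha : a ≠ 0) (hb : b ≠ 0) (hab : a - b ≠ 0) :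
    (2/a + 2*(ξ:ℂ)*a) * (a-b)⁻¹ + (2/b + 2*(ξ:ℂ)*b) * (b-a)⁻¹
      = -(2 * a⁻¹ * b⁻¹) + 2*(ξ:ℂ) := by
  rw [show (b-a)⁻¹ = -(a-b)⁻¹ by rw [← neg_sub a b, inv_neg]]
  field_simp
  ring

set_option maxHeartbeats 2000000 in
/-- The GFF data coupled to the chordal SLE with a fixed time reparametrization
(`δ(z) = 2/z + 2ξz`, `σ = -√κ`) coincides with the chordal one. -/
theorem coupling_chordal_fixed_time_change (κ ξ : ℝ) (hκ : 0 < κ) (μ : ℂ)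
    (hμ : μ = Complex.I * (4 - (κ : ℂ)) / (4 * (Real.sqrt κ : ℂ)))
    (δ σ dδ dσ : ℂ → ℂ) (η u : ℂ → ℝ)
    (hδ : ∀ z, δ z = 2 / z + 2 * (ξ : ℂ) * z)
    (hdδ : ∀ z, dδ z = -2 / z ^ 2 + 2 * (ξ : ℂ))
    (hσ : ∀ z, σ z = -(Real.sqrt κ : ℂ))
    (hdσ : ∀ z, dσ z = 0)
    (hη : ∀ z, η z = -(2 / Real.sqrt κ) * Complex.arg z)
    (hu : ∀ z, u z = 2 * (1 / z).im) :
    ∀ z w : ℂ, 0 < z.im → 0 < w.im → z ≠ w →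
      (σ z * wD (fun x => (η x : ℂ)) z
        + (starRingEnd ℂ) (σ z) * wDbar (fun x => (η x : ℂ)) z
        + 2 * ((μ * dσ z).re : ℂ) = (u z : ℂ))
      ∧ (δ z * wD (fun x => (η x : ℂ)) z
        + (starRingEnd ℂ) (δ z) * wDbar (fun x => (η x : ℂ)) z
        + 2 * ((μ * dδ z).re : ℂ)
        + (1 / 2) * (σ z * wD (fun x => (u x : ℂ)) z
            + (starRingEnd ℂ) (σ z) * wDbar (fun x => (u x : ℂ)) z) = 0)
      ∧ (δ z * wD (fun x => (GammaD x w : ℂ)) z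
        + (starRingEnd ℂ) (δ z) * wDbar (fun x => (GammaD x w : ℂ)) z
        + δ w * wD (fun x => (GammaD z x : ℂ)) w
        + (starRingEnd ℂ) (δ w) * wDbar (fun x => (GammaD z x : ℂ)) w
        + (u z : ℂ) * (u w : ℂ) = 0) := by
  intro z w hz hw hzw
  have hs : Real.sqrt κ ≠ 0 := by positivity
  have hs0 : (Real.sqrt κ : ℂ) ≠ 0 := Complex.ofReal_ne_zero.mpr hs
  have hz0 : z ≠ 0 := fun h => by simp [h] at hz
  have hw0 : w ≠ 0 := fun h => by simp [h] at hw
  have hcz0 : (starRingEnd ℂ) z ≠ 0 := fun h => hz0 (by simpa using congrArg (starRingEnd ℂ) h)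
  have hcw0 : (starRingEnd ℂ) w ≠ 0 := fun h => hw0 (by simpa using congrArg (starRingEnd ℂ) h)
  have hzslit : z ∈ Complex.slitPlane := Or.inr hz.ne'
  have hsub1 : z - w ≠ 0 := sub_ne_zero.mpr hzw
  have hslit2 : z - (starRingEnd ℂ) w ∈ Complex.slitPlane := by
    refine Or.inr (ne_of_gt ?_)
    simp only [Complex.sub_im, Complex.conj_im]
    linarith
  have hslit3 : w - (starRingEnd ℂ) z ∈ Complex.slitPlane := by
    refine Or.inr (ne_of_gt ?_)
    simp only [Complex.sub_im, Complex.conj_im]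
    linarith
  have hzw2 : z - (starRingEnd ℂ) w ≠ 0 := Complex.slitPlane_ne_zero hslit2
  have hwz2 : w - (starRingEnd ℂ) z ≠ 0 := Complex.slitPlane_ne_zero hslit3
  -- derivatives of η
  have hηfg : (fun x => ((η x : ℝ) : ℂ)) = fun x =>
      ((2 * Complex.I / (Real.sqrt κ : ℂ)) * Complex.log x +
        (starRingEnd ℂ) ((2 * Complex.I / (Real.sqrt κ : ℂ)) * Complex.log x)) / 2 := by
    funext x
    rw [hη x]
    push_cast
    rw [← Complex.log_im x, ofReal_im']
    simp only [map_mul, map_div₀, Complex.conj_I, Complex.conj_ofReal, map_ofNat]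
    field_simp
    ring
  obtain ⟨hη1, hη2⟩ := key ((Complex.hasDerivAt_log hzslit).const_mul
    (2 * Complex.I / (Real.sqrt κ : ℂ))) hηfg
  -- derivatives of u
  have hufg : (fun x => ((u x : ℝ) : ℂ)) = fun x =>
      ((-2 * Complex.I) * x⁻¹ + (starRingEnd ℂ) ((-2 * Complex.I) * x⁻¹)) / 2 := by
    funext x
    rw [hu x]
    push_cast
    rw [ofReal_im']
    simp only [map_mul, map_inv₀, Complex.conj_I, map_neg, map_ofNat, one_div]
    ring
  obtain ⟨hu1, hu2⟩ := key ((hasDerivAt_inv hz0).const_mul (-2 * Complex.I)) hufg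
  -- derivatives of GammaD
  obtain ⟨hg1, hg2⟩ := gammaD_left hsub1 hslit2
  obtain ⟨hg3, hg4⟩ := gammaD_right hsub1 hslit3
  refine ⟨?_, ?_, ?_⟩
  · rw [hη1, hη2, hσ, hdσ, hu, mul_zero, Complex.zero_re]
    push_cast
    rw [ofReal_im' (1/z)]
    simp only [map_mul, map_div₀, map_inv₀, map_neg, map_ofNat, Complex.conj_I,
      Complex.conj_ofReal, one_div]
    field_simp
    ring_nf
  · have hκs : (κ:ℂ) = (Real.sqrt κ : ℂ)^2 := by
      rw [← Complex.ofReal_pow, Real.sq_sqrt hκ.le]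
    rw [hη1, hη2, hu1, hu2, hσ, hδ, hdδ, hμ,
      ofReal_re' ((Complex.I * (4 - (κ:ℂ)) / (4 * (Real.sqrt κ : ℂ))) * (-2 / z ^ 2 + 2 * (ξ:ℂ))), hκs]
    simp only [map_mul, map_div₀, map_inv₀, map_neg, map_add, map_sub, map_ofNat,
      Complex.conj_I, Complex.conj_ofReal, map_pow, map_one]
    field_simp
    ring_nf
  · have hczw : (starRingEnd ℂ) z - (starRingEnd ℂ) w ≠ 0 := by
      rw [← map_sub]
      exact fun h => hsub1 (by simpa using congrArg (starRingEnd ℂ) h)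
    have hczw2 : (starRingEnd ℂ) z - w ≠ 0 := fun h => hwz2 (by rw [← neg_sub]; simp [h])
    have hcwz2 : (starRingEnd ℂ) w - z ≠ 0 := fun h => hzw2 (by rw [← neg_sub]; simp [h])
    have huu : ((u z : ℝ) : ℂ) * ((u w : ℝ) : ℂ) =
        -((1/z - (starRingEnd ℂ) (1/z)) * (1/w - (starRingEnd ℂ) (1/w))) := by
      rw [hu z, hu w]
      push_cast
      rw [ofReal_im' (1/z), ofReal_im' (1/w)]
      ring_nf
      rw [Complex.I_sq]
      ring
    have e1 := ealg1 ξ hz0 hw0 hsub1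
    have e2 := ealg1 ξ hcz0 hcw0 hczw
    have e3 := ealg2 ξ hz0 hcw0 hzw2
    have e4 := ealg2 ξ hcz0 hw0 hczw2
    rw [hg1, hg2, hg3, hg4, hδ z, hδ w, huu]
    simp only [map_mul, map_div₀, map_inv₀, map_neg, map_add, map_sub, map_ofNat,
      Complex.conj_I, Complex.conj_ofReal, Complex.conj_conj, one_div]
    linear_combination ((1:ℂ)/2) * e1 + ((1:ℂ)/2) * e2 + ((1:ℂ)/2) * e3 + ((1:ℂ)/2) * e4
end

section
/- Let κ > 0, ν, α, β ∈ ℝ and μ := i(4-κ)/(4√κ). Then the identity (β√κ - αν)·sinh²(z/2) + ν·sinh(z/2) - 2i√κ·μ·cosh(z/2)·(4α·sinh(z/2) + (κ-4)) = 0 holds for all z in the strip S := {z ∈ ℂ : 0 < Im z < π} if and only if κ = 4, ν = 0 and β = 0 (with α arbitrary). Consequently, coupling of the Gaussian free field with combined Dirichlet–Neumann covariance Γ_DN to the dipolar (δ,σ)-SLE with drift ν is possible only for κ = 4 and ν = 0. -/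
/-!
On the imaginary segment `z = 2θi`, `0 < θ < π/2`, of the strip we have `sinh (z/2) = i sin θ` and
`cosh (z/2) = cos θ`, while `2i√κ μ = (κ - 4)/2` is real. The identity thus splits into the real
equations `(β√κ - αν) sin² θ + ((κ - 4)²/2) cos θ = 0` and `ν sin θ - 2α(κ - 4) sin θ cos θ = 0`.
Since `sin²` and `cos`, and likewise `sin` and `sin · cos`, are linearly independent on
`(0, π/2)` (evaluate at `π/6` and `π/3`), all coefficients vanish, forcing `κ = 4`, `ν = 0` and
`β√κ = 0`. Conversely `κ = 4` makes `μ = 0`, and the identity collapses.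
-/

open Complex

namespace Real

theorem eq_zero_of_forall_mul_sin_sq_add_mul_cos_eq_zero {a b : ℝ}
    (h : ∀ θ : ℝ, 0 < θ → θ < π / 2 → a * sin θ ^ 2 + b * cos θ = 0) : a = 0 ∧ b = 0 := by
  have hπ := pi_pos
  have h6 := h (π / 6) (by positivity) (by linarith)
  have h3 := h (π / 3) (by positivity) (by linarith)
  rw [sin_pi_div_six, cos_pi_div_six] at h6
  rw [sin_pi_div_three, cos_pi_div_three, div_pow, sq_sqrt zero_le_three] at h3
  have hsqrt3 : 1 < √3 := by rw [lt_sqrt zero_le_one]; norm_num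
  have hfac : a * (3 * √3 - 1) = 0 := by linear_combination 4 * √3 * h3 - 4 * h6
  have ha : a = 0 := (mul_eq_zero.mp hfac).resolve_right (by linarith)
  exact ⟨ha, by subst ha; linarith⟩

theorem eq_zero_of_forall_mul_sin_add_mul_sin_mul_cos_eq_zero {a b : ℝ}
    (h : ∀ θ : ℝ, 0 < θ → θ < π / 2 → a * sin θ + b * (sin θ * cos θ) = 0) :
    a = 0 ∧ b = 0 := by
  have hπ := pi_pos
  have h6 := h (π / 6) (by positivity) (by linarith)
  have h3 := h (π / 3) (by positivity) (by linarith)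
  rw [sin_pi_div_six, cos_pi_div_six] at h6
  rw [sin_pi_div_three, cos_pi_div_three] at h3
  have hsqrt3 : 1 < √3 := by rw [lt_sqrt zero_le_one]; norm_num
  have hfac : a * (√3 - 1) = 0 := by linear_combination 2 * h3 - 2 * h6
  have ha : a = 0 := (mul_eq_zero.mp hfac).resolve_right (by linarith)
  subst ha
  exact ⟨rfl, by nlinarith⟩

end Real

namespace Complex

theorem mul_sinh_sq_add_mul_sinh_sub_mul_cosh_mul_ofReal_mul_I (A ν c α k θ : ℝ) :
    (A : ℂ) * sinh (θ * I) ^ 2 + ν * sinh (θ * I) - c * cosh (θ * I) * (4 * α * sinh (θ * I) + k)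
      = ((-A * Real.sin θ ^ 2 + -(c * k) * Real.cos θ : ℝ) : ℂ)
        + ((ν * Real.sin θ + -(4 * α * c) * (Real.sin θ * Real.cos θ) : ℝ) : ℂ) * I := by
  rw [sinh_mul_I, cosh_mul_I]
  push_cast
  linear_combination (A * sin (θ : ℂ) ^ 2) * I_sq

theorem ofReal_add_ofReal_mul_I_eq_zero {x y : ℝ} : (x : ℂ) + y * I = 0 ↔ x = 0 ∧ y = 0 := by
  rw [← mk_eq_add_mul_I, Complex.ext_iff]
  rfl

end Complex

/-- Coupling of the GFF with combined Dirichlet–Neumann covariance to the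
dipolar (δ,σ)-SLE with drift ν is possible only for κ = 4 and ν = 0. -/
theorem coupling_dirichlet_neumann_only_kappa_four (κ ν α β : ℝ) (hκ : 0 < κ)
    (μ : ℂ) (hμ : μ = Complex.I * (4 - (κ : ℂ)) / (4 * (Real.sqrt κ : ℂ))) :
    (∀ z : ℂ, 0 < z.im → z.im < Real.pi →
      ((β : ℂ) * (Real.sqrt κ : ℂ) - (α : ℂ) * (ν : ℂ)) * Complex.sinh (z / 2) ^ 2
        + (ν : ℂ) * Complex.sinh (z / 2)
        - 2 * Complex.I * (Real.sqrt κ : ℂ) * μ * Complex.cosh (z / 2)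
            * (4 * (α : ℂ) * Complex.sinh (z / 2) + ((κ : ℂ) - 4)) = 0)
    ↔ (κ = 4 ∧ ν = 0 ∧ β = 0) := by
  have hsqrt : 0 < √κ := Real.sqrt_pos.mpr hκ
  have hc : 2 * I * (√κ : ℂ) * μ = ((κ - 4) / 2 : ℝ) := by
    rw [hμ]
    field_simp [ofReal_ne_zero.mpr hsqrt.ne']
    push_cast
    linear_combination (8 - 2 * (κ : ℂ)) * I_sq
  constructor
  · intro h
    have on_imaginary_axis : ∀ θ : ℝ, 0 < θ → θ < Real.pi / 2 →
        -(β * √κ - α * ν) * Real.sin θ ^ 2 + -((κ - 4) / 2 * (κ - 4)) * Real.cos θ = 0 ∧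
        ν * Real.sin θ + -(4 * α * ((κ - 4) / 2)) * (Real.sin θ * Real.cos θ) = 0 := by
      intro θ hθ₀ hθ₁
      have hz := h (2 * θ * I) (by simpa using hθ₀) (by simpa using (by linarith : 2 * θ < Real.pi))
      rw [show 2 * (θ : ℂ) * I / 2 = θ * I by ring, hc] at hz
      rw [← ofReal_add_ofReal_mul_I_eq_zero,
        ← mul_sinh_sq_add_mul_sinh_sub_mul_cosh_mul_ofReal_mul_I]
      push_cast at hz ⊢
      exact hz
    obtain ⟨hA, hk⟩ := Real.eq_zero_of_forall_mul_sin_sq_add_mul_cos_eq_zero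
      fun θ hθ₀ hθ₁ => (on_imaginary_axis θ hθ₀ hθ₁).1
    obtain ⟨rfl, -⟩ := Real.eq_zero_of_forall_mul_sin_add_mul_sin_mul_cos_eq_zero
      fun θ hθ₀ hθ₁ => (on_imaginary_axis θ hθ₀ hθ₁).2
    refine ⟨by nlinarith, rfl, ?_⟩
    simpa [hsqrt.ne'] using hA
  · rintro ⟨rfl, rfl, rfl⟩ z - -
    simp [hμ]
end

section
/- Let κ > 0, ν, α, β ∈ ℝ and μ := i(4-κ)/(4√κ). Then the identity (β√κ - αν)·sin²(z/2) + ν·sin(z/2) - 2i√κ·μ·cos(z/2)·(4α·sin(z/2) + (κ-4)) = 0 holds for all z ∈ ℍ if and only if κ = 4, ν = 0 and β = 0 (with α arbitrary). Consequently, coupling of the twisted Gaussian free field with covariance Γ_tw to the radial (δ,σ)-SLE with drift ν is possible only for κ = 4 and ν = 0. -/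
/-!
With `k = 2i√κ μ = (κ - 4)/2`, the identity reads
`(β√κ - αν) sin² + ν sin - 4αk sin·cos - k(κ - 4) cos = 0` at `w = z/2`, and the functions
`sin², sin, sin·cos, cos` are linearly independent on the upper half-plane. Shifting `w` by `π`
separates the even part `sin², sin·cos` from the odd part `sin, cos`; shifting by `π/2` turns each
part into a rotation of its coefficient pair, which therefore vanishes.
So `ν = 0`, `(κ - 4)² = 0` and `β√κ = 0`.
-/

open Complex

lemma Complex.sin_I_ne_zero : sin I ≠ 0 := by
  intro h
  obtain ⟨k, hk⟩ := sin_eq_zero_iff.mp h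
  simpa using congrArg im hk

lemma Complex.cos_I_ne_zero : cos I ≠ 0 := by
  intro h
  obtain ⟨k, hk⟩ := cos_eq_zero_iff.mp h
  simpa using congrArg im hk

lemma Complex.eq_zero_of_sin_cos_rotation {w x y : ℂ} (h₁ : x * sin w + y * cos w = 0)
    (h₂ : x * cos w - y * sin w = 0) : x = 0 ∧ y = 0 := by
  have hw := sin_sq_add_cos_sq w
  constructor
  · linear_combination sin w * h₁ + cos w * h₂ - x * hw
  · linear_combination cos w * h₁ - sin w * h₂ - y * hw

lemma Complex.even_odd_eq_zero_of_sin_cos_comb {a b p q w : ℂ}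
    (h : ∀ w : ℂ, 0 < w.im → a * sin w ^ 2 + b * sin w + p * (sin w * cos w) + q * cos w = 0)
    (hw : 0 < w.im) :
    a * sin w ^ 2 + p * (sin w * cos w) = 0 ∧ b * sin w + q * cos w = 0 := by
  have h₀ := h w hw
  have hπ := h (w + Real.pi) (by simpa using hw)
  rw [sin_add_pi, cos_add_pi] at hπ
  exact ⟨by linear_combination (h₀ + hπ) / 2, by linear_combination (h₀ - hπ) / 2⟩

lemma Complex.eq_zero_of_sin_cos_comb_eq_zero_on_upperHalfPlane {a b p q : ℂ}
    (h : ∀ w : ℂ, 0 < w.im → a * sin w ^ 2 + b * sin w + p * (sin w * cos w) + q * cos w = 0) :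
    a = 0 ∧ b = 0 ∧ p = 0 ∧ q = 0 := by
  have hI : 0 < I.im := by simp
  have hI' : 0 < (I + Real.pi / 2).im := by simp
  obtain ⟨heven, hodd⟩ := even_odd_eq_zero_of_sin_cos_comb h hI
  obtain ⟨heven', hodd'⟩ := even_odd_eq_zero_of_sin_cos_comb h hI'
  rw [sin_add_pi_div_two, cos_add_pi_div_two] at heven' hodd'
  obtain ⟨hb, hq⟩ := eq_zero_of_sin_cos_rotation hodd (by linear_combination hodd')
  have hap : a * sin I + p * cos I = 0 :=
    (mul_eq_zero.mp (by linear_combination heven : sin I * (a * sin I + p * cos I) = 0)).resolve_left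
      sin_I_ne_zero
  have hap' : a * cos I - p * sin I = 0 :=
    (mul_eq_zero.mp (by linear_combination heven' : cos I * (a * cos I - p * sin I) = 0)).resolve_left
      cos_I_ne_zero
  obtain ⟨ha, hp⟩ := eq_zero_of_sin_cos_rotation hap hap'
  exact ⟨ha, hb, hp, hq⟩

/-- Coupling of the twisted GFF with covariance `Γ_tw` to the radial
(δ,σ)-SLE with drift ν is possible only for κ = 4 and ν = 0. -/
theorem coupling_twisted_only_kappa_four (κ ν α β : ℝ) (hκ : 0 < κ)
    (μ : ℂ) (hμ : μ = Complex.I * (4 - (κ : ℂ)) / (4 * (Real.sqrt κ : ℂ))) :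
    (∀ z : ℂ, 0 < z.im →
      ((β : ℂ) * (Real.sqrt κ : ℂ) - (α : ℂ) * (ν : ℂ)) * Complex.sin (z / 2) ^ 2
        + (ν : ℂ) * Complex.sin (z / 2)
        - 2 * Complex.I * (Real.sqrt κ : ℂ) * μ * Complex.cos (z / 2)
            * (4 * (α : ℂ) * Complex.sin (z / 2) + ((κ : ℂ) - 4)) = 0)
    ↔ (κ = 4 ∧ ν = 0 ∧ β = 0) := by
  have hsqrt : (Real.sqrt κ : ℂ) ≠ 0 := by exact_mod_cast (Real.sqrt_pos.mpr hκ).ne'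
  have hk : 2 * I * (Real.sqrt κ : ℂ) * μ = ((κ : ℂ) - 4) / 2 := by
    rw [hμ]
    field_simp
    linear_combination (4 * (4 - (κ : ℂ))) * I_sq
  constructor
  · intro h
    obtain ⟨ha, hν, -, hq⟩ := eq_zero_of_sin_cos_comb_eq_zero_on_upperHalfPlane
      (a := β * Real.sqrt κ - α * ν) (b := ν) (p := -2 * α * (κ - 4)) (q := -((κ - 4) ^ 2 / 2))
      fun w hw => by
        have := h (2 * w) (by simpa using hw)
        rw [hk, mul_div_cancel_left₀ w two_ne_zero] at this
        linear_combination this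
    have hκ4 : (κ : ℂ) = 4 := by
      have hsq : ((κ : ℂ) - 4) ^ 2 = 0 := by linear_combination -2 * hq
      linear_combination pow_eq_zero_iff two_ne_zero |>.mp hsq
    have hβ : (β : ℂ) = 0 :=
      (mul_eq_zero.mp (by linear_combination ha + α * hν)).resolve_right hsqrt
    exact ⟨by exact_mod_cast hκ4, by exact_mod_cast hν, by exact_mod_cast hβ⟩
  · rintro ⟨rfl, rfl, rfl⟩ z -
    rw [hk]
    push_cast
    ring
end

section
/- For z, w in the strip S := {z ∈ ℂ : 0 < Im z < π} with z ≠ w, define Γ_DN(z,w) := -log|tanh((z-w)/4)| + log|tanh((z - conj w)/4)| (all tanh values are finite and nonzero there). Then: (a) Γ_DN(z,w) = Γ_DN(w,z); (b) for every x ∈ ℝ and w ∈ S, the same formula gives Γ_DN(x,w) = 0 (Dirichlet condition on ℝ); (c) for every s ∈ ℝ, Γ_DN(z+s, w+s) = Γ_DN(z,w) (invariance under the automorphisms generated by σ); (d) for every x ∈ ℝ and w ∈ S, the function y ↦ -log|tanh((x+iy-w)/4)| + log|tanh((x+iy-conj w)/4)| is differentiable at y = π with derivative 0 (Neumann condition on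 the line Im z = π). -/
open Complex

/-- The Green's function of the strip `{0 < Im z < π}` with combined
Dirichlet–Neumann boundary conditions:
`Γ_DN(z,w) = -log|tanh((z-w)/4)| + log|tanh((z - conj w)/4)|`. -/
noncomputable def GammaDN (z w : ℂ) : ℝ :=
  - Real.log ‖Complex.tanh ((z - w) / 4)‖
  + Real.log ‖Complex.tanh ((z - (starRingEnd ℂ) w) / 4)‖

/-- The strip `S = {z : 0 < Im z < π}`. -/
def stripS : Set ℂ := {z : ℂ | 0 < z.im ∧ z.im < Real.pi}

/-- Decomposition of complex `sinh` into real and imaginary parts. -/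
lemma sinh_decomp' (a b : ℝ) :
    Complex.sinh ((a : ℂ) + (b : ℂ) * Complex.I)
      = ((Real.sinh a * Real.cos b : ℝ) : ℂ)
        + ((Real.cosh a * Real.sin b : ℝ) : ℂ) * Complex.I := by
  rw [Complex.sinh_add, Complex.sinh_mul_I, Complex.cosh_mul_I,
    ← Complex.ofReal_sinh, ← Complex.ofReal_cosh, ← Complex.ofReal_sin, ← Complex.ofReal_cos]
  push_cast
  ring

/-- Decomposition of complex `cosh` into real and imaginary parts. -/
lemma cosh_decomp' (a b : ℝ) :
    Complex.cosh ((a : ℂ) + (b : ℂ) * Complex.I)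
      = ((Real.cosh a * Real.cos b : ℝ) : ℂ)
        + ((Real.sinh a * Real.sin b : ℝ) : ℂ) * Complex.I := by
  rw [Complex.cosh_add, Complex.sinh_mul_I, Complex.cosh_mul_I,
    ← Complex.ofReal_sinh, ← Complex.ofReal_cosh, ← Complex.ofReal_sin, ← Complex.ofReal_cos]
  push_cast
  ring

lemma sinh_re' (u : ℂ) : (Complex.sinh u).re = Real.sinh u.re * Real.cos u.im := by
  have h := sinh_decomp' u.re u.im
  rw [Complex.re_add_im] at h
  rw [h]
  simp only [Complex.add_re, Complex.mul_re, Complex.ofReal_re, Complex.ofReal_im,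
    Complex.I_re, Complex.I_im]
  ring

lemma sinh_im' (u : ℂ) : (Complex.sinh u).im = Real.cosh u.re * Real.sin u.im := by
  have h := sinh_decomp' u.re u.im
  rw [Complex.re_add_im] at h
  rw [h]
  simp only [Complex.add_im, Complex.mul_im, Complex.ofReal_re, Complex.ofReal_im,
    Complex.I_re, Complex.I_im]
  ring

lemma cosh_re' (u : ℂ) : (Complex.cosh u).re = Real.cosh u.re * Real.cos u.im := by
  have h := cosh_decomp' u.re u.im
  rw [Complex.re_add_im] at h
  rw [h]
  simp only [Complex.add_re, Complex.mul_re, Complex.ofReal_re, Complex.ofReal_im,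
    Complex.I_re, Complex.I_im]
  ring

lemma cosh_im' (u : ℂ) : (Complex.cosh u).im = Real.sinh u.re * Real.sin u.im := by
  have h := cosh_decomp' u.re u.im
  rw [Complex.re_add_im] at h
  rw [h]
  simp only [Complex.add_im, Complex.mul_im, Complex.ofReal_re, Complex.ofReal_im,
    Complex.I_re, Complex.I_im]
  ring

/-- For `0 < Im u < π/2`, `cosh u ≠ 0`, `sinh u ≠ 0` and `Im (tanh u) > 0`. -/
lemma trig_facts {u : ℂ} (h1 : 0 < u.im) (h2 : u.im < Real.pi / 2) :
    Complex.cosh u ≠ 0 ∧ Complex.sinh u ≠ 0 ∧ 0 < (Complex.tanh u).im := by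
  have hcos : 0 < Real.cos u.im :=
    Real.cos_pos_of_mem_Ioo ⟨by linarith [Real.pi_pos], h2⟩
  have hsin : 0 < Real.sin u.im :=
    Real.sin_pos_of_pos_of_lt_pi h1 (by linarith [Real.pi_pos])
  have hcosh : Complex.cosh u ≠ 0 := by
    intro h
    have : (Complex.cosh u).re = 0 := by rw [h]; simp
    rw [cosh_re'] at this
    nlinarith [Real.cosh_pos u.re]
  have hsinh : Complex.sinh u ≠ 0 := by
    intro h
    have : (Complex.sinh u).im = 0 := by rw [h]; simp
    rw [sinh_im'] at this
    nlinarith [Real.cosh_pos u.re]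
  refine ⟨hcosh, hsinh, ?_⟩
  have hN : 0 < Complex.normSq (Complex.cosh u) := Complex.normSq_pos.mpr hcosh
  rw [Complex.tanh_eq_sinh_div_cosh, Complex.div_im, sinh_re', sinh_im', cosh_re', cosh_im']
  have key : Real.cosh u.re * Real.sin u.im * (Real.cosh u.re * Real.cos u.im) /
      Complex.normSq (Complex.cosh u) -
      Real.sinh u.re * Real.cos u.im * (Real.sinh u.re * Real.sin u.im) /
      Complex.normSq (Complex.cosh u)
      = Real.sin u.im * Real.cos u.im *
        (Real.cosh u.re ^ 2 - Real.sinh u.re ^ 2) / Complex.normSq (Complex.cosh u) := by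
    ring
  rw [key, Real.cosh_sq_sub_sinh_sq]
  positivity

/-- Derivative of complex `tanh`. -/
lemma hasDerivAt_ctanh {u : ℂ} (h : Complex.cosh u ≠ 0) :
    HasDerivAt Complex.tanh (1 / Complex.cosh u ^ 2) u := by
  have hd := (Complex.hasDerivAt_sinh u).div (Complex.hasDerivAt_cosh u) h
  have hfun : (Complex.sinh / Complex.cosh) = Complex.tanh := by
    funext y; simp [Complex.tanh_eq_sinh_div_cosh]
  have hval : (Complex.cosh u * Complex.cosh u - Complex.sinh u * Complex.sinh u) /
      Complex.cosh u ^ 2 = 1 / Complex.cosh u ^ 2 := by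
    have h2 := Complex.cosh_sq_sub_sinh_sq u
    field_simp
    linear_combination h2
  rwa [hfun, hval] at hd

/-- The key derivative of one log-abs-tanh term. -/
lemma term_deriv (x : ℝ) (c : ℂ)
    (hb1 : 0 < ((((x : ℂ) + (Real.pi : ℂ) * Complex.I - c)) / 4).im)
    (hb2 : ((((x : ℂ) + (Real.pi : ℂ) * Complex.I - c)) / 4).im < Real.pi / 2) :
    HasDerivAt
      (fun y : ℝ => Real.log ‖Complex.tanh (((x : ℂ) + (y : ℂ) * Complex.I - c) / 4)‖)
      ((Complex.I / (4 * (Complex.sinh (((x : ℂ) + (Real.pi : ℂ) * Complex.I - c) / 4) *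
        Complex.cosh (((x : ℂ) + (Real.pi : ℂ) * Complex.I - c) / 4)))).re) Real.pi := by
  set u : ℂ := ((x : ℂ) + (Real.pi : ℂ) * Complex.I - c) / 4 with hu
  obtain ⟨hcosh, hsinh, htanhim⟩ := trig_facts hb1 hb2
  have htanh : Complex.tanh u ≠ 0 := fun h => by simp [h] at htanhim
  have hslit : Complex.tanh u ∈ Complex.slitPlane :=
    Complex.mem_slitPlane_iff.mpr (Or.inr (ne_of_gt htanhim))
  -- inner function
  have h0 : HasDerivAt (fun y : ℝ => ((x : ℂ) + (y : ℂ) * Complex.I - c) / 4)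
      (Complex.I / 4) Real.pi := by
    have h1 : HasDerivAt (fun y : ℝ => ((y : ℂ))) 1 Real.pi := by
      simpa using (hasDerivAt_id Real.pi).ofReal_comp
    have := (((h1.mul_const Complex.I).const_add ((x : ℂ))).sub_const c).div_const 4
    simpa using this
  -- tanh composed
  have htan : HasDerivAt (fun y : ℝ => Complex.tanh (((x : ℂ) + (y : ℂ) * Complex.I - c) / 4))
      ((Complex.I / 4) * (1 / Complex.cosh u ^ 2)) Real.pi := by
    have := (hasDerivAt_ctanh hcosh).scomp Real.pi h0
    simpa [Function.comp_def, smul_eq_mul] using this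
  -- log composed
  have hlog := htan.clog_real hslit
  rw [← hu] at hlog
  have hval : ((Complex.I / 4) * (1 / Complex.cosh u ^ 2) / Complex.tanh u)
      = Complex.I / (4 * (Complex.sinh u * Complex.cosh u)) := by
    rw [Complex.tanh_eq_sinh_div_cosh]
    field_simp
  rw [hval] at hlog
  have hre := Complex.reCLM.hasFDerivAt.comp_hasDerivAt Real.pi hlog
  simp only [Function.comp_def, Complex.reCLM_apply, Complex.log_re] at hre
  exact hre

/-- Conjugation identity used for the Neumann condition. -/
lemma conj_quotient (Q : ℂ) :
    Complex.I / (4 * -((starRingEnd ℂ) Q)) = (starRingEnd ℂ) (Complex.I / (4 * Q)) := by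
  rw [map_div₀, map_mul, Complex.conj_I, map_ofNat, mul_neg, div_neg, neg_div]

/-- Properties of the Dirichlet–Neumann Green's function of the strip:
symmetry, Dirichlet condition on ℝ, invariance under horizontal translations,
and the Neumann condition on the line `Im z = π`. -/
theorem gammaDN_properties :
    (∀ z ∈ stripS, ∀ w ∈ stripS, z ≠ w → GammaDN z w = GammaDN w z)
    ∧ (∀ (x : ℝ), ∀ w ∈ stripS, GammaDN (x : ℂ) w = 0)
    ∧ (∀ (s : ℝ), ∀ z ∈ stripS, ∀ w ∈ stripS, z ≠ w →
        GammaDN (z + (s : ℂ)) (w + (s : ℂ)) = GammaDN z w)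
    ∧ (∀ (x : ℝ), ∀ w ∈ stripS,
        HasDerivAt (fun y : ℝ => GammaDN ((x : ℂ) + (y : ℂ) * Complex.I) w)
          0 Real.pi) := by
  refine ⟨?_, ?_, ?_, ?_⟩
  · -- symmetry
    intro z _ w _ _
    unfold GammaDN
    have h1 : ‖Complex.tanh ((z - w) / 4)‖
        = ‖Complex.tanh ((w - z) / 4)‖ := by
      rw [show (w - z) / 4 = -((z - w) / 4) by ring, Complex.tanh_neg, norm_neg]
    have h2 : ‖Complex.tanh ((z - (starRingEnd ℂ) w) / 4)‖
        = ‖Complex.tanh ((w - (starRingEnd ℂ) z) / 4)‖ := by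
      have e : (w - (starRingEnd ℂ) z) / 4 = -((starRingEnd ℂ) ((z - (starRingEnd ℂ) w) / 4)) := by
        rw [map_div₀, map_sub, map_ofNat]
        simp only [Complex.conj_conj]
        ring
      rw [e, Complex.tanh_neg, Complex.tanh_conj, norm_neg, Complex.norm_conj]
    rw [h1, h2]
  · -- Dirichlet on ℝ
    intro x w _
    unfold GammaDN
    have e : ((x : ℂ) - (starRingEnd ℂ) w) / 4 = (starRingEnd ℂ) (((x : ℂ) - w) / 4) := by
      rw [map_div₀, map_sub, Complex.conj_ofReal, map_ofNat]
    rw [e, Complex.tanh_conj, Complex.norm_conj]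
    ring
  · -- translation invariance
    intro s z _ w _ _
    unfold GammaDN
    have e1 : (z + (s : ℂ) - (w + (s : ℂ))) / 4 = (z - w) / 4 := by ring
    have e2 : (z + (s : ℂ) - (starRingEnd ℂ) (w + (s : ℂ))) / 4
        = (z - (starRingEnd ℂ) w) / 4 := by
      rw [map_add, Complex.conj_ofReal]
      ring
    rw [e1, e2]
  · -- Neumann on Im z = π
    intro x w hw
    obtain ⟨hw1, hw2⟩ := hw
    have him1 : (((x : ℂ) + (Real.pi : ℂ) * Complex.I - w) / 4).im = (Real.pi - w.im) / 4 := by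
      simp [Complex.div_im, Complex.normSq_apply]
    have him2 : (((x : ℂ) + (Real.pi : ℂ) * Complex.I - (starRingEnd ℂ) w) / 4).im
        = (Real.pi + w.im) / 4 := by
      simp [Complex.div_im, Complex.normSq_apply]
    have hb11 : 0 < (((x : ℂ) + (Real.pi : ℂ) * Complex.I - w) / 4).im := by
      rw [him1]; linarith
    have hb12 : (((x : ℂ) + (Real.pi : ℂ) * Complex.I - w) / 4).im < Real.pi / 2 := by
      rw [him1]; linarith [Real.pi_pos]
    have hb21 : 0 < (((x : ℂ) + (Real.pi : ℂ) * Complex.I - (starRingEnd ℂ) w) / 4).im := by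
      rw [him2]; linarith [Real.pi_pos]
    have hb22 : (((x : ℂ) + (Real.pi : ℂ) * Complex.I - (starRingEnd ℂ) w) / 4).im
        < Real.pi / 2 := by
      rw [him2]; linarith
    have hd1 := term_deriv x w hb11 hb12
    have hd2 := term_deriv x ((starRingEnd ℂ) w) hb21 hb22
    obtain ⟨hcosh1, hsinh1, -⟩ := trig_facts hb11 hb12
    set u₁ : ℂ := ((x : ℂ) + (Real.pi : ℂ) * Complex.I - w) / 4 with hu₁
    set u₂ : ℂ := ((x : ℂ) + (Real.pi : ℂ) * Complex.I - (starRingEnd ℂ) w) / 4 with hu₂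
    -- key conjugation identity
    have hkey : u₂ = (starRingEnd ℂ) u₁ + ((Real.pi / 2 : ℝ) : ℂ) * Complex.I := by
      rw [hu₁, hu₂, map_div₀, map_sub, map_add, map_mul, Complex.conj_ofReal,
        Complex.conj_ofReal, Complex.conj_I, map_ofNat]
      push_cast
      ring
    have hs2 : Complex.sinh u₂ = Complex.I * (starRingEnd ℂ) (Complex.cosh u₁) := by
      rw [hkey, Complex.sinh_add, Complex.sinh_mul_I, Complex.cosh_mul_I,
        ← Complex.ofReal_sin, ← Complex.ofReal_cos, Real.sin_pi_div_two, Real.cos_pi_div_two,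
        Complex.sinh_conj, Complex.cosh_conj]
      push_cast
      ring
    have hc2 : Complex.cosh u₂ = Complex.I * (starRingEnd ℂ) (Complex.sinh u₁) := by
      rw [hkey, Complex.cosh_add, Complex.sinh_mul_I, Complex.cosh_mul_I,
        ← Complex.ofReal_sin, ← Complex.ofReal_cos, Real.sin_pi_div_two, Real.cos_pi_div_two,
        Complex.sinh_conj, Complex.cosh_conj]
      push_cast
      ring
    have hP2 : Complex.sinh u₂ * Complex.cosh u₂
        = -((starRingEnd ℂ) (Complex.sinh u₁ * Complex.cosh u₁)) := by
      rw [hs2, hc2, map_mul]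
      have hI : Complex.I * Complex.I = -1 := Complex.I_mul_I
      linear_combination ((starRingEnd ℂ) (Complex.cosh u₁) *
        (starRingEnd ℂ) (Complex.sinh u₁)) * hI
    have hzero : -(Complex.I / (4 * (Complex.sinh u₁ * Complex.cosh u₁))).re
        + (Complex.I / (4 * (Complex.sinh u₂ * Complex.cosh u₂))).re = 0 := by
      rw [hP2, conj_quotient, Complex.conj_re]
      ring
    have hfinal := hd1.neg.add hd2
    rw [hzero] at hfinal
    exact hfinal
end

section
/- Let κ ≥ 0 and ξ ∈ ℝ, and consider the vector fields δ̃(z) := 2/z + κ + 2ξ·z and σ̃(z) := -√κ·(1 + 2z) on ℍ. Then: (a) for every h ∈ ℝ, Re( σ̃(-1/2 + ih) ) = 0; (b) for every h > 0, Re( δ̃(-1/2 + ih) ) = -1/(h² + 1/4) + κ - ξ; and (c) Re( δ̃(-1/2 + ih) ) < 0 for all h > 0 if and only if ξ ≥ κ. Consequently, the half-plane region {z ∈ ℍ : Re z > -1/2} is invariant under the (δ̃,σ̃)-SLE flow exactly when ξ ≥ κ. -/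
/-!
On the line `z = -1/2 + ih` the factor `1 + 2z = 2ih` is purely imaginary, and
`Re (2 / z) = -1 / |z|²` increases to `0` as `h → ∞`; hence `Re δ̃ < 0` for all `h > 0`
exactly when the constant part `κ - ξ` of the real part is `≤ 0`.
-/

open Complex

theorem re_neg_half_add_mul_I (h : ℝ) : ((-1 / 2 : ℂ) + h * I).re = -1 / 2 := by
  simp

theorem im_neg_half_add_mul_I (h : ℝ) : ((-1 / 2 : ℂ) + h * I).im = h := by
  simp

theorem re_ofReal_mul_one_add_two_mul_neg_half_add_mul_I (c h : ℝ) :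
    ((c : ℂ) * (1 + 2 * ((-1 / 2 : ℂ) + h * I))).re = 0 := by
  rw [show 1 + 2 * ((-1 / 2 : ℂ) + h * I) = 2 * h * I by ring]
  simp

theorem re_two_div_neg_half_add_mul_I (h : ℝ) :
    (2 / ((-1 / 2 : ℂ) + h * I)).re = -1 / (h ^ 2 + 1 / 4) := by
  rw [div_re, normSq_apply, re_neg_half_add_mul_I, im_neg_half_add_mul_I, re_ofNat, im_ofNat]
  have hpos : 0 < h ^ 2 + 1 / 4 := by positivity
  field_simp
  ring

theorem forall_pos_neg_one_div_add_lt_zero_iff (c : ℝ) :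
    (∀ h : ℝ, 0 < h → -1 / (h ^ 2 + 1 / 4) + c < 0) ↔ c ≤ 0 := by
  constructor
  · intro hall
    by_contra! hc
    have hlarge : 1 / c < (1 / c + 1) ^ 2 + 1 / 4 := by nlinarith [one_div_pos.2 hc]
    have hsmall : 1 / ((1 / c + 1) ^ 2 + 1 / 4) < c := by
      simpa using one_div_lt_one_div_of_lt (one_div_pos.2 hc) hlarge
    have hneg := hall (1 / c + 1) (by positivity)
    rw [neg_div] at hneg
    linarith
  · intro hc h _
    have : 0 < 1 / (h ^ 2 + 1 / 4) := by positivity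
    rw [neg_div]
    linarith

theorem invariant_region_iff_general (κ ξ : ℝ)
    (δt σt : ℂ → ℂ)
    (hδt : ∀ z, δt z = 2 / z + (κ : ℂ) + 2 * (ξ : ℂ) * z)
    (hσt : ∀ z, σt z = -(Real.sqrt κ : ℂ) * (1 + 2 * z)) :
    (∀ h : ℝ, (σt ((-1 / 2 : ℂ) + (h : ℂ) * Complex.I)).re = 0)
    ∧ (∀ h : ℝ, 0 < h →
        (δt ((-1 / 2 : ℂ) + (h : ℂ) * Complex.I)).re = -1 / (h ^ 2 + 1 / 4) + κ - ξ)
    ∧ ((∀ h : ℝ, 0 < h → (δt ((-1 / 2 : ℂ) + (h : ℂ) * Complex.I)).re < 0) ↔ ξ ≥ κ) := by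
  have hδ_re : ∀ h : ℝ,
      (δt ((-1 / 2 : ℂ) + h * I)).re = -1 / (h ^ 2 + 1 / 4) + κ - ξ := by
    intro h
    rw [hδt, add_re, add_re, re_two_div_neg_half_add_mul_I, ofReal_re,
      show (2 : ℂ) * ξ = ((2 * ξ : ℝ) : ℂ) by push_cast; rfl, re_ofReal_mul, re_neg_half_add_mul_I]
    ring
  refine ⟨fun h => ?_, fun h _ => hδ_re h, ?_⟩
  · rw [hσt, ← ofReal_neg]
    exact re_ofReal_mul_one_add_two_mul_neg_half_add_mul_I _ h
  · simp_rw [hδ_re, add_sub_assoc, forall_pos_neg_one_div_add_lt_zero_iff]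
    exact sub_nonpos

/-- The half-plane region `{Re z > -1/2}` is invariant under the (δ̃,σ̃)-SLE
flow (with the fixed boundary point moved to infinity) exactly when ξ ≥ κ. -/
theorem invariant_region_iff (κ ξ : ℝ) (hκ : 0 ≤ κ)
    (δt σt : ℂ → ℂ)
    (hδt : ∀ z, δt z = 2 / z + (κ : ℂ) + 2 * (ξ : ℂ) * z)
    (hσt : ∀ z, σt z = -(Real.sqrt κ : ℂ) * (1 + 2 * z)) :
    (∀ h : ℝ, (σt ((-1 / 2 : ℂ) + (h : ℂ) * Complex.I)).re = 0)
    ∧ (∀ h : ℝ, 0 < h →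
        (δt ((-1 / 2 : ℂ) + (h : ℂ) * Complex.I)).re = -1 / (h ^ 2 + 1 / 4) + κ - ξ)
    ∧ ((∀ h : ℝ, 0 < h → (δt ((-1 / 2 : ℂ) + (h : ℂ) * Complex.I)).re < 0) ↔ ξ ≥ κ) :=
  invariant_region_iff_general κ ξ δt σt hδt hσt
end
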